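/- For every natural number m ≥ 1 and every natural number base u ≥ 2, it is not the case that the rebased Goodstein sequence is strictly increasing at every step; that is, it is false that S(n+1, u, G(n, m)) < S(n+2, u, G(n+1, m)) holds for all n ≥ 1. -/

import Mathlib

/-- `hsub b u m` substitutes the value `u` for the base `b` throughout the
hereditary base-`b` representation of `m` (with `hsub b u 0 = 0`). -/
def hsub (b u : ℕ) (m : ℕ) : ℕ :=
  if m = 0 then 0
  else
    u ^ hsub b u (Nat.log b m) * (m / b ^ Nat.log b m) + hsub b u (m % b ^ Nat.log b m)
termination_by m
decreasing_by
  · exact Nat.log_lt_self b (by assumption)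
  · have hpos : 0 < b ^ Nat.log b m := by
      rcases Nat.eq_zero_or_pos b with hb | hb
      · simp [hb]
      · exact pow_pos hb _
    exact lt_of_lt_of_le (Nat.mod_lt _ hpos) (Nat.pow_log_le_self b (by assumption))

/-- Goodstein's base-change ("bumping") function: replace the base `b` by `b + 1`
throughout the hereditary base-`b` representation of `m` (with `B b 0 = 0`). -/
def B (b m : ℕ) : ℕ := hsub b (b + 1) m

/-- The Goodstein sequence of `m`: `G 1 m = m`, and `G (k+1) m = B (k+1) (G k m) - 1`
for `k ≥ 1` (truncated subtraction), so the `k`-th term is written in hereditary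
base `k + 1`. -/
def G : ℕ → ℕ → ℕ
  | 0, m => m
  | 1, m => m
  | (k + 2), m => B (k + 2) (G (k + 1) m) - 1

/-- The auxiliary Goodstein-type sequence: `L 1 k = k ^ k` (written in hereditary
base `k`), and `L (n+1) k = B (k+n-1) (L n k) - 1` for `n ≥ 1` (truncated
subtraction), so the `n`-th term is written in hereditary base `k + n - 1`. -/
def L : ℕ → ℕ → ℕ
  | 0, k => k ^ k
  | 1, k => k ^ k
  | (n + 2), k => B (k + n) (L (n + 1) k) - 1

/-- `O b m` is the ordinal obtained by substituting `ω` for the base `b`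
throughout the hereditary base-`b` representation of `m` (with `O b 0 = 0`). -/
noncomputable def O (b : ℕ) (m : ℕ) : Ordinal :=
  if m = 0 then 0
  else
    Ordinal.omega0 ^ O b (Nat.log b m) * ((m / b ^ Nat.log b m : ℕ) : Ordinal)
      + O b (m % b ^ Nat.log b m)
termination_by m
decreasing_by
  · exact Nat.log_lt_self b (by assumption)
  · have hpos : 0 < b ^ Nat.log b m := by
      rcases Nat.eq_zero_or_pos b with hb | hb
      · simp [hb]
      · exact pow_pos hb _
    exact lt_of_lt_of_le (Nat.mod_lt _ hpos) (Nat.pow_log_le_self b (by assumption))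

/- Goodstein's theorem: substituting ω for the base turns the Goodstein sequence into a
sequence of ordinals which strictly decreases as long as the terms are nonzero, since the base
change leaves this ordinal unchanged and the substitution is strictly monotone. Hence some term
`G n m` with `n ≥ 1` vanishes; then so does the next one, and the rebased sequence takes the
value `0` twice in a row. -/

open Ordinal

namespace Nat

theorem pow_log_pos (b m : ℕ) : 0 < b ^ log b m := by
  rcases eq_or_ne b 0 with rfl | hb
  · simp [log_zero_left]
  · exact pos_of_ne_zero (pow_ne_zero _ hb)

theorem mod_pow_log_lt_self (b : ℕ) {m : ℕ} (hm : m ≠ 0) : m % b ^ log b m < m :=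
  (mod_lt _ (pow_log_pos b m)).trans_le (pow_log_le_self b hm)

theorem div_pow_log_pos (b : ℕ) {m : ℕ} (hm : m ≠ 0) : 0 < m / b ^ log b m :=
  div_pos (pow_log_le_self b hm) (pow_log_pos b m)

theorem div_pow_log_lt {b : ℕ} (hb : 1 < b) (m : ℕ) : m / b ^ log b m < b := by
  rw [div_lt_iff_lt_mul (pow_log_pos b m), ← pow_succ']
  exact lt_pow_succ_log_self hb m

theorem log_pow_mul_add {b E d r : ℕ} (hd0 : 0 < d) (hd : d < b) (hr : r < b ^ E) :
    log b (b ^ E * d + r) = E := by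
  apply log_eq_of_pow_le_of_lt_pow
  · exact (Nat.le_mul_of_pos_right _ hd0).trans (le_add_right _ _)
  · calc b ^ E * d + r < b ^ E * (d + 1) := by rw [Nat.mul_succ]; omega
      _ ≤ b ^ E * b := Nat.mul_le_mul_left _ hd
      _ = b ^ (E + 1) := (pow_succ _ _).symm

end Nat

/-- `hsubOrd b w m` substitutes the ordinal `w` for the base `b` throughout the hereditary
base-`b` representation of `m`; both `hsub b u` and `O b` are instances of it. -/
noncomputable def hsubOrd (b : ℕ) (w : Ordinal) (m : ℕ) : Ordinal :=
  if m = 0 then 0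
  else
    w ^ hsubOrd b w (Nat.log b m) * ((m / b ^ Nat.log b m : ℕ) : Ordinal)
      + hsubOrd b w (m % b ^ Nat.log b m)
termination_by m
decreasing_by
  · exact Nat.log_lt_self b ‹_›
  · exact Nat.mod_pow_log_lt_self b ‹_›

theorem hsubOrd_zero (b : ℕ) (w : Ordinal) : hsubOrd b w 0 = 0 := by
  rw [hsubOrd, if_pos rfl]

theorem hsubOrd_of_ne_zero (b : ℕ) (w : Ordinal) {m : ℕ} (hm : m ≠ 0) :
    hsubOrd b w m = w ^ hsubOrd b w (Nat.log b m) * ((m / b ^ Nat.log b m : ℕ) : Ordinal)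
      + hsubOrd b w (m % b ^ Nat.log b m) := by
  rw [hsubOrd, if_neg hm]

theorem O_eq_hsubOrd (b m : ℕ) : O b m = hsubOrd b ω m := by
  induction m using Nat.strong_induction_on with
  | _ m ih =>
    rw [O, hsubOrd]
    split_ifs with hm
    · rfl
    · rw [ih _ (Nat.log_lt_self b hm), ih _ (Nat.mod_pow_log_lt_self b hm)]

theorem natCast_hsub (b u m : ℕ) : (hsub b u m : Ordinal) = hsubOrd b u m := by
  induction m using Nat.strong_induction_on with
  | _ m ih =>
    rw [hsub, hsubOrd]
    split_ifs with hm
    · rfl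
    · rw [Nat.cast_add, natCast_mul, natCast_pow, ← opow_natCast,
        ih _ (Nat.log_lt_self b hm), ih _ (Nat.mod_pow_log_lt_self b hm)]

section hsubOrd

variable {b : ℕ} {w : Ordinal}

/- The bound below the next power of the base and strict monotonicity are proved together:
each needs the other at smaller arguments. -/
theorem hsubOrd_lt_opow_and_lt_hsubOrd (hb : 1 < b) (hbw : (b : Ordinal) ≤ w) (x : ℕ) :
    (∀ e, x < b ^ e → hsubOrd b w x < w ^ hsubOrd b w e) ∧
      ∀ n, x < n → hsubOrd b w x < hsubOrd b w n := by
  induction x using Nat.strong_induction_on with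
  | _ x ih =>
    have lt_opow : ∀ e, x < b ^ e → hsubOrd b w x < w ^ hsubOrd b w e := by
      intro e hx
      rcases eq_or_ne x 0 with rfl | hx0
      · rw [hsubOrd_zero]
        exact opow_pos _ (lt_of_lt_of_le (by exact_mod_cast hb.pos) hbw)
      rw [hsubOrd_of_ne_zero b w hx0]
      exact opow_mul_add_lt_opow ((Nat.cast_lt.2 (Nat.div_pow_log_lt hb x)).trans_le hbw)
        ((ih _ (Nat.mod_pow_log_lt_self b hx0)).1 _ (Nat.mod_lt _ (Nat.pow_log_pos b x)))
        ((ih _ (Nat.log_lt_self b hx0)).2 _ (Nat.log_lt_of_lt_pow hx0 hx))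
    refine ⟨lt_opow, fun n hxn ↦ ?_⟩
    have hn : n ≠ 0 := by omega
    set l := Nat.log b n
    have hd_pos : (0 : Ordinal) < ((n / b ^ l : ℕ) : Ordinal) :=
      mod_cast Nat.div_pow_log_pos b hn
    rw [hsubOrd_of_ne_zero b w hn]
    rcases lt_or_ge x (b ^ l) with hxl | hlx
    · calc hsubOrd b w x < w ^ hsubOrd b w l := lt_opow l hxl
        _ ≤ w ^ hsubOrd b w l * ((n / b ^ l : ℕ) : Ordinal) := le_mul_left _ hd_pos
        _ ≤ _ := le_self_add
    have hx0 : x ≠ 0 := (Nat.pow_log_pos b n).trans_le hlx |>.ne'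
    have hlog : Nat.log b x = l :=
      le_antisymm (Nat.log_mono_right hxn.le) (Nat.le_log_of_pow_le hb hlx)
    have hmod : x % b ^ l < x := hlog ▸ Nat.mod_pow_log_lt_self b hx0
    rw [hsubOrd_of_ne_zero b w hx0, hlog]
    rcases (Nat.div_le_div_right (c := b ^ l) hxn.le).lt_or_eq with hd | hd
    · calc _ < w ^ hsubOrd b w l * ((n / b ^ l : ℕ) : Ordinal) :=
            opow_mul_add_lt_opow_mul ((ih _ hmod).1 _ (Nat.mod_lt _ (Nat.pow_log_pos b n)))
              (Nat.cast_lt.2 hd)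
        _ ≤ _ := le_self_add
    · have hr : x % b ^ l < n % b ^ l := by
        have := Nat.div_add_mod x (b ^ l)
        have := Nat.div_add_mod n (b ^ l)
        rw [hd] at *
        omega
      rw [hd]
      exact add_lt_add_right ((ih _ hmod).2 _ hr) _

theorem hsubOrd_lt_opow (hb : 1 < b) (hbw : (b : Ordinal) ≤ w) {x e : ℕ} (hx : x < b ^ e) :
    hsubOrd b w x < w ^ hsubOrd b w e :=
  (hsubOrd_lt_opow_and_lt_hsubOrd hb hbw x).1 e hx

theorem hsubOrd_strictMono (hb : 1 < b) (hbw : (b : Ordinal) ≤ w) : StrictMono (hsubOrd b w) :=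
  fun x _ ↦ (hsubOrd_lt_opow_and_lt_hsubOrd hb hbw x).2 _

end hsubOrd

theorem hsubOrd_pow_mul_add {b : ℕ} (w : Ordinal) {E d r : ℕ} (hd0 : 0 < d)
    (hd : d < b) (hr : r < b ^ E) :
    hsubOrd b w (b ^ E * d + r) = w ^ hsubOrd b w E * (d : Ordinal) + hsubOrd b w r := by
  have hb : 0 < b := hd0.trans hd
  have hpos : 0 < b ^ E * d + r := by positivity
  rw [hsubOrd_of_ne_zero b w hpos.ne', Nat.log_pow_mul_add hd0 hd hr,
    Nat.mul_add_div (by positivity), Nat.div_eq_of_lt hr, add_zero, Nat.mul_add_mod,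
    Nat.mod_eq_of_lt hr]

theorem hsub_zero (b u : ℕ) : hsub b u 0 = 0 := by
  rw [hsub, if_pos rfl]

section hsub

variable {b u : ℕ}

theorem hsub_strictMono (hb : 1 < b) (hbu : b ≤ u) : StrictMono (hsub b u) := fun x n hxn ↦ by
  have := hsubOrd_strictMono (w := (u : Ordinal.{0})) hb (Nat.cast_le.2 hbu) hxn
  rwa [← natCast_hsub, ← natCast_hsub, Nat.cast_lt] at this

theorem hsub_lt_pow (hb : 1 < b) (hbu : b ≤ u) {x e : ℕ} (hx : x < b ^ e) :
    hsub b u x < u ^ hsub b u e := by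
  have := hsubOrd_lt_opow (w := (u : Ordinal.{0})) hb (Nat.cast_le.2 hbu) hx
  rwa [← natCast_hsub, ← natCast_hsub, opow_natCast, ← natCast_pow, Nat.cast_lt] at this

theorem hsubOrd_hsub (hb : 1 < b) (hbu : b < u) (w : Ordinal) (m : ℕ) :
    hsubOrd u w (hsub b u m) = hsubOrd b w m := by
  induction m using Nat.strong_induction_on with
  | _ m ih =>
    rcases eq_or_ne m 0 with rfl | hm
    · rw [hsub_zero, hsubOrd_zero, hsubOrd_zero]
    set l := Nat.log b m
    have hd := Nat.div_pow_log_lt hb m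
    have hr : m % b ^ l < b ^ l := Nat.mod_lt _ (Nat.pow_log_pos b m)
    rw [hsub, if_neg hm, hsubOrd_pow_mul_add w (Nat.div_pow_log_pos b hm)
      (hd.trans hbu) (hsub_lt_pow hb hbu.le hr), hsubOrd_of_ne_zero b w hm,
      ih _ (Nat.log_lt_self b hm), ih _ (Nat.mod_pow_log_lt_self b hm)]

end hsub

theorem O_G_lt (k m : ℕ) (hk : G (k + 1) m ≠ 0) :
    O (k + 3) (G (k + 2) m) < O (k + 2) (G (k + 1) m) := by
  have hB : 0 < B (k + 2) (G (k + 1) m) := by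
    rw [B, ← hsub_zero (k + 2) (k + 3)]
    exact hsub_strictMono (by omega) (by omega) (Nat.pos_of_ne_zero hk)
  rw [O_eq_hsubOrd, O_eq_hsubOrd,
    ← hsubOrd_hsub (b := k + 2) (u := k + 3) (by omega) (by omega) ω (G (k + 1) m)]
  exact hsubOrd_strictMono (by omega) (natCast_lt_omega0 _).le (Nat.sub_lt hB one_pos)

/-- Goodstein's theorem. -/
theorem exists_G_eq_zero (m : ℕ) : ∃ n, G (n + 1) m = 0 := by
  by_contra! h
  exact not_strictAnti_of_wellFoundedLT (fun n ↦ O.{0} (n + 2) (G (n + 1) m))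
    (strictAnti_nat_of_succ_lt fun n ↦ O_G_lt n m (h n))

theorem G_succ_eq_zero {n m : ℕ} (h : G (n + 1) m = 0) : G (n + 2) m = 0 := by
  rw [G, h, B, hsub_zero]

theorem rebased_goodstein_not_strictly_increasing_general (m u : ℕ) :
    ¬ ∀ n : ℕ, 1 ≤ n → hsub (n + 1) u (G n m) < hsub (n + 2) u (G (n + 1) m) := by
  intro h
  obtain ⟨n, hn⟩ := exists_G_eq_zero m
  have := h (n + 1) (Nat.le_add_left 1 n)
  rw [hn, G_succ_eq_zero hn, hsub_zero, hsub_zero] at this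
  exact lt_irrefl 0 this

/-- For every `m ≥ 1` and every natural number base `u ≥ 2`, it is not the case
that the Goodstein sequence of `m`, rebased into base `u` (the `n`-th term
`G n m`, written in hereditary base `n+1`, having its base replaced by `u`),
is strictly increasing at every step. -/
theorem rebased_goodstein_not_strictly_increasing (m u : ℕ) (hm : 1 ≤ m) (hu : 2 ≤ u) :
    ¬ ∀ n : ℕ, 1 ≤ n → hsub (n + 1) u (G n m) < hsub (n + 2) u (G (n + 1) m) :=
  rebased_goodstein_not_strictly_increasing_general m u
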